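/- Let {I_u, J_u}_{u∈V} be a nest representation of a finite digraph D = (V,E) in which every interval has positive length, let p_v ∈ J_v be pairwise distinct points, and order V by u ≤ v iff p_u ≤ p_v. Then for all vertices u < v: uv ∈ E if and only if left(J_v) ≤ right(I_u), and vu ∈ E if and only if left(I_v) ≤ right(J_u). -/

import Mathlib

/-- A nest representation of a digraph `E`: closed bounded (nonempty) real intervals
`I_u = [aI u, bI u]` and `J_u = [aJ u, bJ u]` with `J_u ⊆ I_u` for every vertex `u`,
such that `u → v` is an arc iff `I_u ∩ J_v ≠ ∅`. -/
def IsNestRepresentation {V : Type*} (E : V → V → Prop)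
    (aI bI aJ bJ : V → ℝ) : Prop :=
  (∀ u, aI u ≤ bI u) ∧ (∀ u, aJ u ≤ bJ u) ∧
  (∀ u, Set.Icc (aJ u) (bJ u) ⊆ Set.Icc (aI u) (bI u)) ∧
  (∀ u v, E u v ↔ (Set.Icc (aI u) (bI u) ∩ Set.Icc (aJ v) (bJ v)).Nonempty)

/-- An interval nest digraph is one admitting a nest representation. -/
def IsIntervalNestDigraph {V : Type*} (E : V → V → Prop) : Prop :=
  ∃ aI bI aJ bJ : V → ℝ, IsNestRepresentation E aI bI aJ bJ

/-- The arc `uv` is symmetric: both `uv` and `vu` are arcs. -/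
def SymArc {V : Type*} (E : V → V → Prop) (u v : V) : Prop := E u v ∧ E v u

/-- A nest ordering of a digraph `E`: a linear order `le` on the vertices such that
for all `u ≤ v ≤ w ≤ z` (repetitions allowed) properties (i), (ii), (iii) hold. -/
def IsNestOrdering {V : Type*} (E : V → V → Prop) (le : V → V → Prop) : Prop :=
  IsLinearOrder V le ∧
  ∀ u v w z : V, le u v → le v w → le w z →
    ((E u w ∧ E u z → E u v ∨ (SymArc E v w ∧ SymArc E v z ∧ SymArc E w z)) ∧
     (E z u ∧ E z v → E z w ∨ (SymArc E w u ∧ SymArc E v u ∧ SymArc E w v)) ∧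
     (E u z ∧ E v w → E u w ∨ E v z) ∧
     (E z u ∧ E w v → E z v ∨ E w u) ∧
     (E u w ∧ E v z → E v w ∨ E u z) ∧
     (E z v ∧ E w u → E z u ∨ E w v))

/-!
Two closed intervals meet iff each starts before the other ends. When `J_u` starts before `J_v`
ends, one of these two inequalities, for `I_u ∩ J_v` as well as for `I_v ∩ J_u`, already follows
from `J ⊆ I`; the other is the stated criterion.
-/

open Set

theorem Icc_inter_Icc_nonempty_iff {α : Type*} [LinearOrder α] {a₁ b₁ a₂ b₂ : α}
    (h₁ : a₁ ≤ b₁) (h₂ : a₂ ≤ b₂) :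
    (Icc a₁ b₁ ∩ Icc a₂ b₂).Nonempty ↔ a₂ ≤ b₁ ∧ a₁ ≤ b₂ := by
  rw [Icc_inter_Icc, nonempty_Icc, max_le_iff, le_inf_iff, le_inf_iff]
  tauto

namespace IsNestRepresentation

variable {V : Type*} {E : V → V → Prop} {aI bI aJ bJ : V → ℝ}

theorem arc_iff (hrep : IsNestRepresentation E aI bI aJ bJ) (u v : V) :
    E u v ↔ aJ v ≤ bI u ∧ aI u ≤ bJ v := by
  rw [hrep.2.2.2 u v, Icc_inter_Icc_nonempty_iff (hrep.1 u) (hrep.2.1 v)]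

theorem aI_le_aJ (hrep : IsNestRepresentation E aI bI aJ bJ) (u : V) : aI u ≤ aJ u :=
  (hrep.2.2.1 u (left_mem_Icc.2 (hrep.2.1 u))).1

theorem bJ_le_bI (hrep : IsNestRepresentation E aI bI aJ bJ) (u : V) : bJ u ≤ bI u :=
  (hrep.2.2.1 u (right_mem_Icc.2 (hrep.2.1 u))).2

theorem arc_iff_of_aJ_le_bJ (hrep : IsNestRepresentation E aI bI aJ bJ) {u v : V}
    (huv : aJ u ≤ bJ v) : E u v ↔ aJ v ≤ bI u := by
  rw [hrep.arc_iff]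
  exact and_iff_left ((hrep.aI_le_aJ u).trans huv)

theorem arc_swap_iff_of_aJ_le_bJ (hrep : IsNestRepresentation E aI bI aJ bJ) {u v : V}
    (huv : aJ u ≤ bJ v) : E v u ↔ aI v ≤ bJ u := by
  rw [hrep.arc_iff]
  exact and_iff_right (huv.trans (hrep.bJ_le_bI v))

end IsNestRepresentation

theorem nest_point_order_endpoint_criterion_general
    {V : Type*} (E : V → V → Prop)
    (aI bI aJ bJ : V → ℝ)
    (hrep : IsNestRepresentation E aI bI aJ bJ)
    (p : V → ℝ) (hp : ∀ v, p v ∈ Set.Icc (aJ v) (bJ v)) :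
    ∀ u v : V, p u < p v →
      (E u v ↔ aJ v ≤ bI u) ∧ (E v u ↔ aI v ≤ bJ u) := by
  intro u v hpuv
  have hJ : aJ u ≤ bJ v := (hp u).1.trans (hpuv.le.trans (hp v).2)
  exact ⟨hrep.arc_iff_of_aJ_le_bJ hJ, hrep.arc_swap_iff_of_aJ_le_bJ hJ⟩

/-- In a nest representation with positive-length intervals, ordering vertices by
chosen pairwise distinct points `p v ∈ J_v`: for `u < v`, `uv ∈ E` iff
`left(J_v) ≤ right(I_u)`, and `vu ∈ E` iff `left(I_v) ≤ right(J_u)`. -/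
theorem nest_point_order_endpoint_criterion
    {V : Type*} [Fintype V] (E : V → V → Prop)
    (aI bI aJ bJ : V → ℝ)
    (hrep : IsNestRepresentation E aI bI aJ bJ)
    (hposI : ∀ u, aI u < bI u) (hposJ : ∀ u, aJ u < bJ u)
    (p : V → ℝ) (hp : ∀ v, p v ∈ Set.Icc (aJ v) (bJ v))
    (hinj : Function.Injective p) :
    ∀ u v : V, p u < p v →
      (E u v ↔ aJ v ≤ bI u) ∧ (E v u ↔ aI v ≤ bJ u) :=
  nest_point_order_endpoint_criterion_general E aI bI aJ bJ hrep p hp
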